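/- Let U : E → ℝ be continuously differentiable, μ > 0, γ = 2√μ, and let g, ξ : ℝ → E solve ġ = ξ, ξ̇ = −γξ − ∇U(g). Suppose S ⊆ E is convex, U is μ-strongly convex on S with minimizer g* over S, g(0) ∈ S, and the connected component S₀ of the sublevel set {x : U(x) ≤ U(g(0)) + (1/2)‖ξ(0)‖²} containing g(0) satisfies S₀ ⊆ S. Then for all t ≥ 0, U(g(t)) − U(g*) ≤ e^{−(2/3)√μ·t} · L(g(0), ξ(0)), where L(g, ξ) := U(g) − U(g*) + (1/4)‖ξ‖² + (1/4)‖γ(g − g*) + ξ‖². (Theorem 3.5, Euclidean instance.) -/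

import Mathlib

open RealInnerProductSpace Set

/-!
Friction makes the energy `U (g t) + ½‖ξ t‖²` nonincreasing, so the trajectory is a connected
curve inside the sublevel set of the initial energy; it therefore stays in the component `S₀ ⊆ S`,
where `U` is `μ`-strongly convex. With `c = √μ = γ / 2`, the Lyapunov function
`M = U g - U g⋆ + ½‖c (g - g⋆) + ξ‖²` then satisfies `M' ≤ -(2c/3) M`, and
`U g - U g⋆ ≤ M ≤ L` by the parallelogram law.
-/

lemma antitoneOn_Ici_of_hasDerivAt_nonpos {f f' : ℝ → ℝ} {a : ℝ}
    (hf : ∀ t, a ≤ t → HasDerivAt f (f' t) t) (hf' : ∀ t, a < t → f' t ≤ 0) :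
    AntitoneOn f (Ici a) := by
  refine antitoneOn_of_hasDerivWithinAt_nonpos (f' := f') (convex_Ici a)
    (fun t ht => (hf t ht).continuousAt.continuousWithinAt) (fun t ht => ?_) (fun t ht => ?_)
  · rw [interior_Ici] at ht ⊢
    exact (hf t (mem_Ioi.1 ht).le).hasDerivWithinAt
  · rw [interior_Ici] at ht
    exact hf' t ht

lemma le_exp_mul_of_hasDerivAt_le {f f' : ℝ → ℝ} {k t : ℝ}
    (hf : ∀ s, 0 ≤ s → HasDerivAt f (f' s) s) (hf' : ∀ s, 0 < s → f' s ≤ -k * f s)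
    (ht : 0 ≤ t) : f t ≤ Real.exp (-k * t) * f 0 := by
  have hweighted : AntitoneOn (fun s => Real.exp (k * s) * f s) (Ici 0) := by
    refine antitoneOn_Ici_of_hasDerivAt_nonpos
      (f' := fun s => Real.exp (k * s) * (k * f s + f' s)) (fun s hs => ?_) (fun s hs => ?_)
    · refine (((hasDerivAt_id s).const_mul k).exp.mul (hf s hs)).congr_deriv ?_
      simp only [id, mul_one]
      ring
    · exact mul_nonpos_of_nonneg_of_nonpos (Real.exp_pos _).le (by linarith [hf' s hs])
  have h : Real.exp (k * t) * f t ≤ f 0 := by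
    simpa using hweighted self_mem_Ici ht ht
  rw [neg_mul, Real.exp_neg, ← div_eq_inv_mul, le_div_iff₀ (Real.exp_pos _), mul_comm]
  exact h

lemma mem_connectedComponentIn_of_continuousOn_Icc {X : Type*} [TopologicalSpace X]
    {f : ℝ → X} {F : Set X} {a b : ℝ} (hab : a ≤ b) (hf : ContinuousOn f (Icc a b))
    (hfF : MapsTo f (Icc a b) F) : f b ∈ connectedComponentIn F (f a) :=
  (isPreconnected_Icc.image f hf).subset_connectedComponentIn
    (mem_image_of_mem f (left_mem_Icc.2 hab)) hfF.image_subset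
    (mem_image_of_mem f (right_mem_Icc.2 hab))

section DampedGradientFlow

variable {E : Type*} [NormedAddCommGroup E] [InnerProductSpace ℝ E]

noncomputable def dampedLyapunov (U : E → ℝ) (xstar : E) (c : ℝ) (x v : E) : ℝ :=
  U x - U xstar + 1 / 2 * ‖c • (x - xstar) + v‖ ^ 2

variable {U : E → ℝ} {xstar : E} {c : ℝ}

lemma sub_le_dampedLyapunov (x v : E) : U x - U xstar ≤ dampedLyapunov U xstar c x v := by
  unfold dampedLyapunov
  nlinarith [sq_nonneg ‖c • (x - xstar) + v‖]

lemma dampedLyapunov_le (x v : E) :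
    dampedLyapunov U xstar c x v ≤
      U x - U xstar + 1 / 4 * ‖v‖ ^ 2 + 1 / 4 * ‖(2 * c) • (x - xstar) + v‖ ^ 2 := by
  have hpar := parallelogram_law_with_norm ℝ (c • (x - xstar) + v) (c • (x - xstar))
  rw [add_sub_cancel_left, show c • (x - xstar) + v + c • (x - xstar) = (2 * c) • (x - xstar) + v
    by module] at hpar
  unfold dampedLyapunov
  nlinarith [sq_nonneg ‖c • (x - xstar)‖]

variable [CompleteSpace E]

lemma HasGradientAt.comp_hasDerivAt {G : E} {g : ℝ → E} {v : E} {t : ℝ}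
    (hU : HasGradientAt U G (g t)) (hg : HasDerivAt g v t) :
    HasDerivAt (fun s => U (g s)) ⟪G, v⟫ t := by
  simpa only [Function.comp_def, InnerProductSpace.toDual_apply_apply]
    using hU.hasFDerivAt.comp_hasDerivAt t hg

lemma dampedLyapunov_deriv_le {x v : E} (hc : 0 ≤ c) (hmin : U xstar ≤ U x)
    (hstrong : U x + ⟪gradient U x, xstar - x⟫ + c ^ 2 / 2 * ‖xstar - x‖ ^ 2 ≤ U xstar) :
    -(c ^ 2 * ⟪x - xstar, v⟫) - c * ‖v‖ ^ 2 - c * ⟪gradient U x, x - xstar⟫ ≤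
      -(2 / 3 * c) * dampedLyapunov U xstar c x v := by
  rw [← neg_sub x xstar, inner_neg_right, norm_neg] at hstrong
  have hw : ‖c • (x - xstar) + v‖ ^ 2 =
      c ^ 2 * ‖x - xstar‖ ^ 2 + 2 * c * ⟪x - xstar, v⟫ + ‖v‖ ^ 2 := by
    rw [norm_add_sq_real, norm_smul, inner_smul_left, mul_pow, Real.norm_eq_abs, sq_abs,
      conj_trivial]
    ring
  -- the slack is `c/3 (U x - U x⋆) + c/6 (‖c (x - x⋆) + v‖² + 3‖v‖²)` plus `c` times `hstrong`
  unfold dampedLyapunov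
  nlinarith [mul_le_mul_of_nonneg_left hstrong hc, mul_nonneg hc (sub_nonneg.2 hmin),
    mul_nonneg hc (sq_nonneg ‖c • (x - xstar) + v‖), mul_nonneg hc (sq_nonneg ‖v‖)]

variable {g ξ : ℝ → E} {t : ℝ}

lemma hasDerivAt_energy {γ : ℝ} (hU : DifferentiableAt ℝ U (g t)) (hg : HasDerivAt g (ξ t) t)
    (hξ : HasDerivAt ξ ((-γ) • ξ t - gradient U (g t)) t) :
    HasDerivAt (fun s => U (g s) + 1 / 2 * ‖ξ s‖ ^ 2) (-(γ * ‖ξ t‖ ^ 2)) t := by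
  refine ((hU.hasGradientAt.comp_hasDerivAt hg).add
    (hξ.norm_sq.const_mul (1 / 2))).congr_deriv ?_
  simp only [inner_sub_right, inner_smul_right, real_inner_self_eq_norm_sq,
    real_inner_comm (gradient U (g t))]
  ring

lemma mem_connectedComponentIn_energySublevel {γ : ℝ} (hU : Differentiable ℝ U) (hγ : 0 ≤ γ)
    (hg : ∀ t, 0 ≤ t → HasDerivAt g (ξ t) t)
    (hξ : ∀ t, 0 ≤ t → HasDerivAt ξ ((-γ) • ξ t - gradient U (g t)) t) (ht : 0 ≤ t) :
    g t ∈ connectedComponentIn {x | U x ≤ U (g 0) + 1 / 2 * ‖ξ 0‖ ^ 2} (g 0) := by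
  have henergy := antitoneOn_Ici_of_hasDerivAt_nonpos
    (fun s hs => hasDerivAt_energy (hU _) (hg s hs) (hξ s hs))
    (fun s _ => neg_nonpos.2 (by positivity))
  refine mem_connectedComponentIn_of_continuousOn_Icc ht
    (fun s hs => (hg s hs.1).continuousAt.continuousWithinAt) (fun s hs => ?_)
  have hs : U (g s) + 1 / 2 * ‖ξ s‖ ^ 2 ≤ U (g 0) + 1 / 2 * ‖ξ 0‖ ^ 2 :=
    henergy self_mem_Ici hs.1 hs.1
  show U (g s) ≤ U (g 0) + 1 / 2 * ‖ξ 0‖ ^ 2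
  nlinarith [sq_nonneg ‖ξ s‖]

lemma hasDerivAt_dampedLyapunov (hU : DifferentiableAt ℝ U (g t)) (hg : HasDerivAt g (ξ t) t)
    (hξ : HasDerivAt ξ ((-(2 * c)) • ξ t - gradient U (g t)) t) :
    HasDerivAt (fun s => dampedLyapunov U xstar c (g s) (ξ s))
      (-(c ^ 2 * ⟪g t - xstar, ξ t⟫) - c * ‖ξ t‖ ^ 2 - c * ⟪gradient U (g t), g t - xstar⟫) t := by
  have hw := (((hg.sub_const xstar).const_smul c).add hξ).norm_sq
  refine (((hU.hasGradientAt.comp_hasDerivAt hg).sub_const (U xstar)).add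
    (hw.const_mul (1 / 2))).congr_deriv ?_
  simp only [Pi.add_apply, Pi.smul_apply, inner_add_left, inner_add_right, inner_sub_left,
    inner_sub_right, inner_smul_left, inner_smul_right, real_inner_self_eq_norm_sq, conj_trivial,
    real_inner_comm (gradient U (g t))]
  ring

lemma dampedLyapunov_le_exp (hU : Differentiable ℝ U) (hc : 0 ≤ c)
    (hg : ∀ t, 0 ≤ t → HasDerivAt g (ξ t) t)
    (hξ : ∀ t, 0 ≤ t → HasDerivAt ξ ((-(2 * c)) • ξ t - gradient U (g t)) t)
    (hmin : ∀ t, 0 ≤ t → U xstar ≤ U (g t))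
    (hstrong : ∀ t, 0 ≤ t → U (g t) + ⟪gradient U (g t), xstar - g t⟫
      + c ^ 2 / 2 * ‖xstar - g t‖ ^ 2 ≤ U xstar) (ht : 0 ≤ t) :
    dampedLyapunov U xstar c (g t) (ξ t) ≤
      Real.exp (-(2 / 3) * c * t) * dampedLyapunov U xstar c (g 0) (ξ 0) := by
  have h := le_exp_mul_of_hasDerivAt_le (k := 2 / 3 * c)
    (fun s hs => hasDerivAt_dampedLyapunov (hU _) (hg s hs) (hξ s hs))
    (fun s hs => dampedLyapunov_deriv_le hc (hmin s hs.le) (hstrong s hs.le)) ht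
  rwa [← neg_mul] at h

end DampedGradientFlow

theorem convergence_rate_ODE_general
    {E : Type*} [NormedAddCommGroup E] [InnerProductSpace ℝ E] [CompleteSpace E]
    (U : E → ℝ) (hU : ContDiff ℝ 1 U)
    (μ : ℝ) (hμ : 0 < μ)
    (γ : ℝ) (hγ : γ = 2 * Real.sqrt μ)
    (g ξ : ℝ → E)
    (hg : ∀ t, 0 ≤ t → HasDerivAt g (ξ t) t)
    (hξ : ∀ t, 0 ≤ t → HasDerivAt ξ ((-γ) • ξ t - gradient U (g t)) t)
    (S : Set E)
    (hstrong : ∀ x ∈ S, ∀ y ∈ S,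
      U x + ⟪gradient U x, y - x⟫ + μ / 2 * ‖y - x‖ ^ 2 ≤ U y)
    (gstar : E) (hgstarS : gstar ∈ S) (hmin : ∀ x ∈ S, U gstar ≤ U x)
    (hS0 : connectedComponentIn
        {x : E | U x ≤ U (g 0) + (1 / 2 : ℝ) * ‖ξ 0‖ ^ 2} (g 0) ⊆ S) :
    ∀ t, 0 ≤ t →
      U (g t) - U gstar ≤
        Real.exp (-(2 / 3) * Real.sqrt μ * t) *
          (U (g 0) - U gstar + (1 / 4 : ℝ) * ‖ξ 0‖ ^ 2
            + (1 / 4 : ℝ) * ‖γ • (g 0 - gstar) + ξ 0‖ ^ 2) := by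
  intro t ht
  subst hγ
  have hU' : Differentiable ℝ U := hU.differentiable one_ne_zero
  have hmemS : ∀ s, 0 ≤ s → g s ∈ S := fun s hs =>
    hS0 (mem_connectedComponentIn_energySublevel hU' (by positivity) hg hξ hs)
  have hstrong' : ∀ s, 0 ≤ s → U (g s) + ⟪gradient U (g s), gstar - g s⟫
      + Real.sqrt μ ^ 2 / 2 * ‖gstar - g s‖ ^ 2 ≤ U gstar := fun s hs => by
    rw [Real.sq_sqrt hμ.le]
    exact hstrong _ (hmemS s hs) _ hgstarS
  calc U (g t) - U gstar ≤ dampedLyapunov U gstar (Real.sqrt μ) (g t) (ξ t) :=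
        sub_le_dampedLyapunov _ _
    _ ≤ Real.exp (-(2 / 3) * Real.sqrt μ * t) *
          dampedLyapunov U gstar (Real.sqrt μ) (g 0) (ξ 0) :=
        dampedLyapunov_le_exp hU' (Real.sqrt_nonneg μ) hg hξ
          (fun s hs => hmin _ (hmemS s hs)) hstrong' ht
    _ ≤ _ := mul_le_mul_of_nonneg_left (dampedLyapunov_le _ _) (Real.exp_pos _).le

/-- Theorem 3.5 (convergence rate of the optimization ODE), Euclidean instance. -/
theorem convergence_rate_ODE
    {E : Type*} [NormedAddCommGroup E] [InnerProductSpace ℝ E] [CompleteSpace E]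
    (U : E → ℝ) (hU : ContDiff ℝ 1 U)
    (μ : ℝ) (hμ : 0 < μ)
    (γ : ℝ) (hγ : γ = 2 * Real.sqrt μ)
    (g ξ : ℝ → E)
    (hg : ∀ t, 0 ≤ t → HasDerivAt g (ξ t) t)
    (hξ : ∀ t, 0 ≤ t → HasDerivAt ξ ((-γ) • ξ t - gradient U (g t)) t)
    (S : Set E) (hS : Convex ℝ S)
    (hstrong : ∀ x ∈ S, ∀ y ∈ S,
      U x + ⟪gradient U x, y - x⟫ + μ / 2 * ‖y - x‖ ^ 2 ≤ U y)
    (gstar : E) (hgstarS : gstar ∈ S) (hmin : ∀ x ∈ S, U gstar ≤ U x)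
    (hg0 : g 0 ∈ S)
    (hS0 : connectedComponentIn
        {x : E | U x ≤ U (g 0) + (1 / 2 : ℝ) * ‖ξ 0‖ ^ 2} (g 0) ⊆ S) :
    ∀ t, 0 ≤ t →
      U (g t) - U gstar ≤
        Real.exp (-(2 / 3) * Real.sqrt μ * t) *
          (U (g 0) - U gstar + (1 / 4 : ℝ) * ‖ξ 0‖ ^ 2
            + (1 / 4 : ℝ) * ‖γ • (g 0 - gstar) + ξ 0‖ ^ 2) :=
  convergence_rate_ODE_general U hU μ hμ γ hγ g ξ hg hξ S hstrong gstar hgstarS hmin hS0
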